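/- arXiv:1501.06127 — 2 statements merged into one kernel-verified Lean document; each statement's English description precedes it below -/
import Mathlib

section
/- (Case 3: fermionic Toda-type lattice.) Let ξ, η, ξ₂, η₂ ∈ A₁ and q, r, q₂ ∈ A₀ with q invertible, and let c, l ∈ A₀ with ∂c = ∂l = 0. Set r₂ = lq⁻¹, F = q_xq⁻¹ + ξ₂η₂ + ξη, and let 𝒩(λ) be the matrix with rows [λ² + F, −q, λξ], [−r₂, 0, 0], [−λη₂, 0, c]. Then the compatibility condition ∂𝒩 + 𝒩·𝓛(λ; ξ, η, q, r) − 𝓛(λ; ξ₂, η₂, q₂, r₂)·𝒩 = 0 holds identically in λ if and only if: ξ_x = q_xq⁻¹ξ − cξ₂; η₂,ₓ = −q_xq⁻¹η₂ + cη; and (q_xq⁻¹)_x = qr − q₂r₂ − ξ₂,ₓη₂ − ξη_x (a fermionic extension of the Toda lattice). -/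
open Polynomial Matrix

/-- A supercommutative superalgebra `A = A₀ ⊕ A₁` over `ℂ`. -/
structure SuperAlgebra (A : Type*) [Ring A] [Algebra ℂ A] where
  A0 : Submodule ℂ A
  A1 : Submodule ℂ A
  isCompl : IsCompl A0 A1
  algebraMap_mem : ∀ c : ℂ, algebraMap ℂ A c ∈ A0
  mul_mem00 : ∀ {a b : A}, a ∈ A0 → b ∈ A0 → a * b ∈ A0
  mul_mem01 : ∀ {a b : A}, a ∈ A0 → b ∈ A1 → a * b ∈ A1
  mul_mem10 : ∀ {a b : A}, a ∈ A1 → b ∈ A0 → a * b ∈ A1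
  mul_mem11 : ∀ {a b : A}, a ∈ A1 → b ∈ A1 → a * b ∈ A0
  even_comm : ∀ {a : A}, a ∈ A0 → ∀ b : A, a * b = b * a
  odd_anticomm : ∀ {a b : A}, a ∈ A1 → b ∈ A1 → a * b = -(b * a)

/-- An odd superderivation `D` on a superalgebra: `D(ab) = (Da)b + a†(Db)`. -/
structure OddDerivation {A : Type*} [Ring A] [Algebra ℂ A] (S : SuperAlgebra A) where
  D : A →ₗ[ℂ] A
  map_even : ∀ {a : A}, a ∈ S.A0 → D a ∈ S.A1
  map_odd : ∀ {a : A}, a ∈ S.A1 → D a ∈ S.A0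
  leibniz_even : ∀ {a : A}, a ∈ S.A0 → ∀ b : A, D (a * b) = D a * b + a * D b
  leibniz_odd : ∀ {a : A}, a ∈ S.A1 → ∀ b : A, D (a * b) = D a * b - a * D b

/-- An even (parity preserving) `ℂ`-linear derivation on a superalgebra. -/
structure EvenDerivation {A : Type*} [Ring A] [Algebra ℂ A] (S : SuperAlgebra A) where
  D : A →ₗ[ℂ] A
  map_even : ∀ {a : A}, a ∈ S.A0 → D a ∈ S.A0
  map_odd : ∀ {a : A}, a ∈ S.A1 → D a ∈ S.A1
  leibniz : ∀ a b : A, D (a * b) = D a * b + a * D b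

/-- Apply a map coefficientwise to a polynomial (extension of a derivation to
polynomials in the central even indeterminate `λ = X`). -/
noncomputable def cwise {A : Type*} [Ring A] (f : A → A) (P : Polynomial A) : Polynomial A :=
  P.sum fun n a => Polynomial.monomial n (f a)

/-- The entrywise super-parity involution `M ↦ M†` for `3 × 3` matrices having the
standard parity pattern (even entries at `(1,1), (1,2), (2,1), (2,2), (3,3)`; odd entries
at `(1,3), (2,3), (3,1), (3,2)`): it negates exactly the odd positions. -/
def sdag {R : Type*} [Ring R] (M : Matrix (Fin 3) (Fin 3) R) : Matrix (Fin 3) (Fin 3) R :=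
  Matrix.of fun i j => if (i = 2 ∧ j ≠ 2) ∨ (i ≠ 2 ∧ j = 2) then -M i j else M i j

/-- The SUSY AKNS spectral matrix `L(λ; α, β)`, with rows `[0, α, 0], [β, 0, λ], [0, λ, 0]`. -/
def Lgen {R : Type*} [Ring R] (lam a b : R) : Matrix (Fin 3) (Fin 3) R :=
  !![0, a, 0; b, 0, lam; 0, lam, 0]

/-- `L(λ; α, β)` with entries polynomial in the indeterminate `λ = X`. -/
noncomputable def Lpoly {A : Type*} [Ring A] (a b : A) : Matrix (Fin 3) (Fin 3) (Polynomial A) :=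
  Lgen (X : Polynomial A) (C a) (C b)

/-- The component-form SUSY AKNS spectral matrix `𝓛(λ; ξ, η, q, r)` with rows
`[ηξ, q, −λξ], [r, λ² + ξη, 0], [λη, 0, λ²]`. -/
noncomputable def LcompPoly {A : Type*} [Ring A] (ξ η q r : A) :
    Matrix (Fin 3) (Fin 3) (Polynomial A) :=
  !![C (η * ξ), C q, -(X * C ξ);
     C r, X ^ 2 + C (ξ * η), 0;
     X * C η, 0, X ^ 2]

/-- The component-form elementary Darboux matrix `𝒲¹(λ; λ₁; ξ, η₁, q, r₁)` with rows
`[λ² + (1+ξη₁)(qr₁ − λ₁), −q, λξ], [−r₁, 1 − ξη₁, 0], [−λη₁, 0, 1]`. -/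
noncomputable def W1poly {A : Type*} [Ring A] (lam1 ξ η₁ q r₁ : A) :
    Matrix (Fin 3) (Fin 3) (Polynomial A) :=
  !![X ^ 2 + C ((1 + ξ * η₁) * (q * r₁ - lam1)), -(C q), X * C ξ;
     -(C r₁), C (1 - ξ * η₁), 0;
     -(X * C η₁), 0, 1]


section Aux
open Polynomial

lemma cwise_coeff {A : Type*} [Ring A] (f : A → A) (h0 : f 0 = 0) (P : A[X]) (k : ℕ) :
    (cwise f P).coeff k = f (P.coeff k) := by
  rw [cwise, Polynomial.sum_def, Polynomial.finset_sum_coeff]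
  simp only [Polynomial.coeff_monomial]
  rw [Finset.sum_ite_eq' P.support k fun n => f (P.coeff n)]
  split
  · rfl
  · next h => rw [Polynomial.notMem_support_iff.mp h, h0]

variable {A : Type*} [Ring A] [Algebra ℂ A] (f : A →ₗ[ℂ] A)

lemma cwise_C (a : A) : cwise ⇑f (C a) = C (f a) := by
  ext k
  rw [cwise_coeff _ (map_zero f)]
  simp [Polynomial.coeff_C, apply_ite ⇑f, map_zero]

lemma cwise_XC (a : A) : cwise ⇑f (X * C a) = X * C (f a) := by
  ext k
  rw [cwise_coeff _ (map_zero f)]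
  rw [Polynomial.X_mul, Polynomial.X_mul]
  simp [Polynomial.coeff_mul_C, Polynomial.coeff_X, ite_mul, apply_ite ⇑f, map_zero]

lemma cwise_neg (P : A[X]) : cwise ⇑f (-P) = -(cwise ⇑f P) := by
  ext k
  rw [coeff_neg, cwise_coeff _ (map_zero f), cwise_coeff _ (map_zero f), coeff_neg, map_neg]

lemma cwise_zero : cwise ⇑f (0 : A[X]) = 0 := by
  ext k; rw [cwise_coeff _ (map_zero f)]; simp

lemma cwise_X2C (h1 : f 1 = 0) (a : A) : cwise ⇑f (X ^ 2 + C a) = C (f a) := by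
  ext k
  rw [cwise_coeff _ (map_zero f)]
  simp [Polynomial.coeff_add, Polynomial.coeff_X_pow, Polynomial.coeff_C,
    apply_ite ⇑f, map_add, map_zero, h1]

variable {B : Type*} [Ring B]

lemma m1 (a b : B) : C a * C b = C (a * b) := (Polynomial.C_mul).symm

lemma m2 (a b : B) : C a * (X * C b) = X * C (a * b) := by
  rw [X_mul, X_mul, ← mul_assoc, Polynomial.C_mul]

lemma m3 (a b : B) : (X * C a) * C b = X * C (a * b) := by
  rw [mul_assoc, Polynomial.C_mul]

lemma m4 (a b : B) : (X * C a) * (X * C b) = X ^ 2 * C (a * b) := by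
  rw [mul_assoc, m2, ← mul_assoc, ← sq]

lemma m6 (a : B) : C a * X ^ 2 = X ^ 2 * C a := (X_pow_mul).symm

lemma m7 (a : B) : (X * C a) * X ^ 2 = X ^ 3 * C a := by
  rw [X_mul, mul_assoc, ← pow_succ', ← X_pow_mul]

lemma m8 (a : B) : X ^ 2 * (X * C a) = X ^ 3 * C a := by
  rw [← mul_assoc, ← pow_succ]

lemma m9 : (X : B[X]) ^ 2 * X ^ 2 = X ^ 4 := by rw [← pow_add]

lemma coeff_XC (a : B) (n : ℕ) : (X * C a).coeff n = if n = 1 then a else 0 := by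
  rw [X_mul, Polynomial.coeff_C_mul]
  simp [Polynomial.coeff_X, mul_ite, eq_comm]

lemma coeff_XkC (k : ℕ) (a : B) (n : ℕ) : (X ^ k * C a).coeff n = if n = k then a else 0 := by
  rw [X_pow_mul, Polynomial.coeff_C_mul, Polynomial.coeff_X_pow, mul_ite, mul_one, mul_zero]










lemma coeff_CX (a : B) (n : ℕ) : (C a * X).coeff n = if n = 1 then a else 0 := by
  rw [← X_mul, coeff_XC]

lemma coeff_CXk (a : B) (k n : ℕ) : (C a * X ^ k).coeff n = if n = k then a else 0 := by
  rw [← X_pow_mul, coeff_XkC]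

end Aux

/-- **Case 3: fermionic Toda-type lattice.** With `r₂ = lq⁻¹`,
`F = q_xq⁻¹ + ξ₂η₂ + ξη` and the gauge matrix `𝒩` with rows
`[λ² + F, −q, λξ], [−r₂, 0, 0], [−λη₂, 0, c]`, the compatibility condition
`∂𝒩 + 𝒩𝓛 − 𝓛₂𝒩 = 0` holds identically in `λ` iff the fermionic extension of the Toda
lattice holds. -/
theorem fermionic_toda_lattice {A : Type*} [Ring A] [Algebra ℂ A]
    (S : SuperAlgebra A) (𝒳 : EvenDerivation S)
    (ξ η ξ₂ η₂ : A) (hξ : ξ ∈ S.A1) (hη : η ∈ S.A1) (hξ₂ : ξ₂ ∈ S.A1) (hη₂ : η₂ ∈ S.A1)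
    (q r q₂ : A) (hq : q ∈ S.A0) (hr : r ∈ S.A0) (hq₂ : q₂ ∈ S.A0)
    (qinv : A) (hqinv : q * qinv = 1 ∧ qinv * q = 1)
    (c l : A) (hc : c ∈ S.A0) (hl : l ∈ S.A0) (hdc : 𝒳.D c = 0) (hdl : 𝒳.D l = 0)
    (N : Matrix (Fin 3) (Fin 3) (Polynomial A))
    (hN : N = !![X ^ 2 + C ((𝒳.D q) * qinv + ξ₂ * η₂ + ξ * η), -(C q), X * C ξ;
                 -(C (l * qinv)), 0, 0;
                 -(X * C η₂), 0, C c]) :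
    (N.map (cwise fun a => 𝒳.D a)
        + N * LcompPoly ξ η q r
        - LcompPoly ξ₂ η₂ q₂ (l * qinv) * N = 0)
      ↔ (𝒳.D ξ = (𝒳.D q) * qinv * ξ - c * ξ₂
          ∧ 𝒳.D η₂ = -((𝒳.D q) * qinv) * η₂ + c * η
          ∧ 𝒳.D ((𝒳.D q) * qinv)
              = q * r - q₂ * (l * qinv) - (𝒳.D ξ₂) * η₂ - ξ * (𝒳.D η)) := by
  
  obtain ⟨hq1, hq2⟩ := hqinv
  have hD1 : 𝒳.D 1 = 0 := by
    have h := 𝒳.leibniz 1 1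
    rw [one_mul, mul_one, one_mul] at h
    exact (left_eq_add.mp h)
  have h1A : (1 : A) ∈ S.A0 := by
    have := S.algebraMap_mem 1; rwa [_root_.map_one] at this
  have hqinv0 : qinv ∈ S.A0 := by
    have htop : qinv ∈ S.A0 ⊔ S.A1 := by
      rw [codisjoint_iff.mp S.isCompl.codisjoint]; trivial
    obtain ⟨u, hu, v, hv, huv⟩ := Submodule.mem_sup.mp htop
    have hqv0 : q * v ∈ S.A0 := by
      have hqv : q * v = 1 - q * u := by
        have : q * (u + v) = 1 := by rw [huv, hq1]
        rw [mul_add] at this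
        linear_combination (norm := noncomm_ring) this
      rw [hqv]
      exact Submodule.sub_mem _ h1A (S.mul_mem00 hq hu)
    have hqv1 : q * v ∈ S.A1 := S.mul_mem01 hq hv
    have hqvz : q * v = 0 := by
      have := S.isCompl.disjoint
      exact (Submodule.disjoint_def.mp this) _ hqv0 hqv1
    have hvz : v = 0 := by
      calc v = (qinv * q) * v := by rw [hq2, one_mul]
      _ = qinv * (q * v) := mul_assoc _ _ _
      _ = 0 := by rw [hqvz, mul_zero]
    rw [← huv, hvz, add_zero]; exact hu
  have oddsq : ∀ x : A, x ∈ S.A1 → x * x = 0 := by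
    intro x hx
    have h := S.odd_anticomm hx hx
    have h3 : (2 : ℂ) • (x * x) = 0 := by
      rw [two_smul]
      nth_rewrite 1 [h]
      exact neg_add_cancel _
    have h4 := congrArg (fun y => ((2 : ℂ)⁻¹) • y) h3
    simpa [smul_smul] using h4
  have hDqinv : 𝒳.D qinv = -(qinv * (𝒳.D q * qinv)) := by
    have h := 𝒳.leibniz q qinv
    rw [hq1, hD1] at h
    have h2 : q * 𝒳.D qinv = -(𝒳.D q * qinv) := by
      linear_combination (norm := noncomm_ring) -h
    calc 𝒳.D qinv = (qinv * q) * 𝒳.D qinv := by rw [hq2, one_mul]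
    _ = qinv * (q * 𝒳.D qinv) := mul_assoc _ _ _
    _ = -(qinv * (𝒳.D q * qinv)) := by rw [h2, mul_neg]
  set E := 𝒳.D q * qinv with hE
  have hE0 : E ∈ S.A0 := S.mul_mem00 (𝒳.map_even hq) hqinv0
  set F := E + ξ₂ * η₂ + ξ * η with hF
  set a := 𝒳.D ξ - (E * ξ - c * ξ₂) with ha
  set b := 𝒳.D η₂ - (-E * η₂ + c * η) with hb
  set g := 𝒳.D E - (q * r - q₂ * (l * qinv) - 𝒳.D ξ₂ * η₂ - ξ * 𝒳.D η) with hg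
  have hDF : 𝒳.D F = 𝒳.D E + (𝒳.D ξ₂ * η₂ + ξ₂ * 𝒳.D η₂) + (𝒳.D ξ * η + ξ * 𝒳.D η) := by
    rw [hF]; rw [map_add, map_add, 𝒳.leibniz ξ₂ η₂, 𝒳.leibniz ξ η]
  have hDlq : 𝒳.D (l * qinv) = 𝒳.D l * qinv + l * 𝒳.D qinv := 𝒳.leibniz l qinv
  have key : N.map (cwise fun x => 𝒳.D x) + N * LcompPoly ξ η q r
      - LcompPoly ξ₂ η₂ q₂ (l * qinv) * N
      = !![C (g + ξ₂ * b + a * η), 0, X * C a; 0, 0, 0; -(X * C b), 0, 0] := by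
    subst hN
    rw [show (cwise fun x : A => 𝒳.D x) = cwise ⇑𝒳.D from rfl]
    ext i j n
    fin_cases i <;> fin_cases j <;>
      simp only [Fin.zero_eta, Fin.mk_one, Fin.reduceFinMk, Fin.isValue, LcompPoly,
        Matrix.map_apply, Matrix.add_apply, Matrix.sub_apply, Matrix.mul_apply,
        Fin.sum_univ_three, Matrix.cons_val', Matrix.cons_val_zero, Matrix.cons_val_one,
        Matrix.cons_val_two, Matrix.head_cons, Matrix.tail_cons, Matrix.empty_val',
        Matrix.cons_val_fin_one, Matrix.head_fin_const, Matrix.of_apply, Matrix.zero_apply,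
        cwise_C, cwise_XC, cwise_neg, cwise_zero, cwise_X2C _ hD1,
        mul_neg, neg_mul, neg_neg, add_mul, mul_add, zero_mul, mul_zero, add_zero, zero_add,
        m1, m2, m3, m4, m6, m7, m8, m9,
        Polynomial.coeff_add, Polynomial.coeff_sub, Polynomial.coeff_neg,
        Polynomial.coeff_C, Polynomial.coeff_X_pow, coeff_XC, coeff_XkC,
        Polynomial.coeff_zero]
    · -- (0,0)
      rcases n with _|_|_|_|n <;> simp
      · linear_combination (norm := noncomm_ring) hDF - hg - ξ₂ * hb - ha * η -
          S.even_comm hc ξ₂ * η + S.even_comm hE0 ξ₂ * η₂ + hF * (η * ξ) - η₂ * ξ₂ * hF +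
          E * S.odd_anticomm hη hξ + S.even_comm hE0 (η₂ * ξ₂) - E * S.odd_anticomm hξ₂ hη₂ -
          η₂ * oddsq ξ₂ hξ₂ * η₂ + ξ * oddsq η hη * ξ + ξ₂ * η₂ * S.odd_anticomm hη hξ -
          S.odd_anticomm hξ₂ hη₂ * (ξ * η)
      · linear_combination (norm := noncomm_ring) S.odd_anticomm hη hξ - S.odd_anticomm hη₂ hξ₂
    · -- (0,1)
      rcases n with _|_|_|_|n <;> simp
      linear_combination (norm := noncomm_ring) hF * q + hE * q + 𝒳.D q * hq2 -
        S.even_comm hq (ξ * η) + S.odd_anticomm hξ₂ hη₂ * q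
    · -- (0,2)
      rcases n with _|_|_|_|n <;> simp
      linear_combination (norm := noncomm_ring) -ha - hF * ξ - S.odd_anticomm hξ₂ hη₂ * ξ -
        ξ * S.odd_anticomm hη hξ + oddsq ξ hξ * η - S.even_comm hc ξ₂
    · -- (1,0)
      rcases n with _|_|_|_|n <;> simp
      linear_combination (norm := noncomm_ring) -hDlq - hdl * qinv - l * hDqinv -
        l * qinv * hF - l * qinv * S.odd_anticomm hη hξ +
        S.even_comm (S.mul_mem11 hξ₂ hη₂) (l * qinv)
    · -- (1,1)
      simp
    · -- (1,2)
      simp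
    · -- (2,0)
      rcases n with _|_|_|_|n <;> simp
      linear_combination (norm := noncomm_ring) hb - η₂ * S.odd_anticomm hη hξ - η₂ * hF +
        S.even_comm hE0 η₂ - S.odd_anticomm hη₂ hξ₂ * η₂ + ξ₂ * oddsq η₂ hη₂
    · -- (2,1)
      simp
    · -- (2,2)
      simp [hdc]
  rw [key]
  constructor
  · intro h
    have h02 : X * C a = 0 := by simpa using Matrix.ext_iff.mpr h 0 2
    have ha0 : a = 0 := by
      have := congrArg (fun p => p.coeff 1) h02
      simpa [coeff_XC] using this
    have h20 : -(X * C b) = 0 := by simpa using Matrix.ext_iff.mpr h 2 0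
    have hb0 : b = 0 := by
      have := congrArg (fun p => p.coeff 1) (neg_eq_zero.mp h20)
      simpa [coeff_XC] using this
    have h00 : C (g + ξ₂ * b + a * η) = 0 := by simpa using Matrix.ext_iff.mpr h 0 0
    have hw : g + ξ₂ * b + a * η = 0 := Polynomial.C_eq_zero.mp h00
    have hg0 : g = 0 := by
      rw [ha0, hb0] at hw
      simpa using hw
    refine ⟨?_, ?_, ?_⟩
    · have := ha0; rw [ha] at this; exact sub_eq_zero.mp this
    · have := hb0; rw [hb] at this; exact sub_eq_zero.mp this
    · have := hg0; rw [hg] at this; exact sub_eq_zero.mp this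
  · rintro ⟨h1, h2, h3⟩
    have ha0 : a = 0 := by rw [ha, h1, sub_self]
    have hb0 : b = 0 := by rw [hb, h2, sub_self]
    have hg0 : g = 0 := by rw [hg, h3, sub_self]
    apply Matrix.ext
    intro i j
    fin_cases i <;> fin_cases j <;> simp [ha0, hb0, hg0, Matrix.vecHead, Matrix.vecTail]
end

section
/- (Full continuum limit equals the potential supersymmetric MKdV equation.) Let ∂_x and ∂_t be even ℂ-linear derivations on A (written a_x = ∂_x a, a_t = ∂_t a), let v ∈ A₀, ξ ∈ A₁, and let w ∈ A₀ be invertible with w_x = v_x w and w_t = v_t w (so that w plays the role of e^v). Then the pair of equations ξ_t = ξ_xxx − 3(w_xw⁻¹)²ξ_x + 3[(w_xw⁻¹)³ − w_xw_xxw⁻²]ξ and w_t = w_xxx − 3w_xw⁻¹w_xx + 3w_xξξ_x holds if and only if the potential supersymmetric MKdV system holds: ξ_t = ξ_xxx − 3v_x²ξ_x − 3v_xv_xxξ and v_t = v_xxx − 2v_x³ + 3v_xξξ_x. -/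
open Polynomial Matrix

lemma aux_rhs1 {A : Type*} [Ring A] (x y w wi p q r : A) (h1 : w * wi = 1)
    (cw : ∀ b, w * b = b * w) :
    r - 3 * (x * w * wi) ^ 2 * q
        + 3 * ((x * w * wi) ^ 3 - x * w * ((y + x * x) * w) * wi ^ 2) * p
      = r - 3 * x ^ 2 * q - 3 * x * y * p := by
  have h0 : x * w * wi = x := by rw [mul_assoc, h1, mul_one]
  have h2 : x * w * ((y + x * x) * w) * wi ^ 2 = x * y + x * (x * x) := by
    rw [pow_two]
    calc x * w * ((y + x * x) * w) * (wi * wi)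
        = x * (w * ((y + x * x) * w)) * (wi * wi) := by noncomm_ring
      _ = x * (((y + x * x) * w) * w) * (wi * wi) := by rw [cw ((y + x * x) * w)]
      _ = x * (y + x * x) * (w * (w * wi * wi)) := by noncomm_ring
      _ = x * (y + x * x) * (w * (1 * wi)) := by rw [h1]
      _ = x * (y + x * x) * (w * wi) := by rw [one_mul]
      _ = x * (y + x * x) := by rw [h1, mul_one]
      _ = x * y + x * (x * x) := by noncomm_ring
  rw [h0, h2]
  noncomm_ring

lemma aux_rhs2 {A : Type*} [Ring A] (x y z w wi p q : A) (h1 : w * wi = 1)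
    (cw : ∀ b, w * b = b * w) (cy : ∀ b, y * b = b * y) :
    (z + (y * x + x * y)) * w + (y + x * x) * (x * w)
        - 3 * (x * w) * wi * ((y + x * x) * w) + 3 * (x * w) * p * q
      = (z - 2 * x ^ 3 + 3 * x * p * q) * w := by
  have h3 : 3 * (x * w) * wi = 3 * x := by
    rw [mul_assoc 3 (x * w) wi, mul_assoc x w wi, h1, mul_one]
  have h4 : 3 * (x * w) * p * q = 3 * (x * (p * q)) * w := by
    calc 3 * (x * w) * p * q = 3 * (x * (w * p)) * q := by noncomm_ring
      _ = 3 * (x * (p * w)) * q := by rw [cw p]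
      _ = 3 * (x * p) * (w * q) := by noncomm_ring
      _ = 3 * (x * p) * (q * w) := by rw [cw q]
      _ = 3 * (x * (p * q)) * w := by noncomm_ring
  have h5 : (y + x * x) * (x * w) = (x * y + x * (x * x)) * w := by
    have h6 : (y + x * x) * (x * w) = (y * x + x * (x * x)) * w := by noncomm_ring
    rw [h6, cy x]
  rw [h3, h4, h5, cy x]
  noncomm_ring

/-- **full continuum limit equals the potential SUSY MKdV equation.**
With `w` invertible, `w_x = v_x w` and `w_t = v_t w` (so `w` plays the role of `e^v`),
the `w`-form of the continuum-limit system holds iff the potential supersymmetric MKdV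
system holds. -/
theorem full_continuum_limit_is_potential_susy_mkdv {A : Type*} [Ring A] [Algebra ℂ A]
    (S : SuperAlgebra A) (𝒳 𝒯 : EvenDerivation S)
    (v : A) (hv : v ∈ S.A0) (ξ : A) (hξ : ξ ∈ S.A1)
    (w winv : A) (hw : w ∈ S.A0) (hwinv : w * winv = 1 ∧ winv * w = 1)
    (hwx : 𝒳.D w = (𝒳.D v) * w) (hwt : 𝒯.D w = (𝒯.D v) * w) :
    ((𝒯.D ξ = 𝒳.D (𝒳.D (𝒳.D ξ)) - 3 * ((𝒳.D w) * winv) ^ 2 * (𝒳.D ξ)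
          + 3 * (((𝒳.D w) * winv) ^ 3 - (𝒳.D w) * (𝒳.D (𝒳.D w)) * winv ^ 2) * ξ
        ∧ 𝒯.D w = 𝒳.D (𝒳.D (𝒳.D w)) - 3 * (𝒳.D w) * winv * (𝒳.D (𝒳.D w))
          + 3 * (𝒳.D w) * ξ * (𝒳.D ξ))
      ↔ (𝒯.D ξ = 𝒳.D (𝒳.D (𝒳.D ξ)) - 3 * (𝒳.D v) ^ 2 * (𝒳.D ξ)
            - 3 * (𝒳.D v) * (𝒳.D (𝒳.D v)) * ξ
          ∧ 𝒯.D v = 𝒳.D (𝒳.D (𝒳.D v)) - 2 * (𝒳.D v) ^ 3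
            + 3 * (𝒳.D v) * ξ * (𝒳.D ξ))) := by
  obtain ⟨hw1, hw2⟩ := hwinv
  have cw : ∀ b, w * b = b * w := S.even_comm hw
  have hvx0 : 𝒳.D v ∈ S.A0 := 𝒳.map_even hv
  have cy : ∀ b, 𝒳.D (𝒳.D v) * b = b * 𝒳.D (𝒳.D v) := S.even_comm (𝒳.map_even hvx0)
  have hDDw : 𝒳.D (𝒳.D w) = (𝒳.D (𝒳.D v) + 𝒳.D v * 𝒳.D v) * w := by
    rw [hwx, 𝒳.leibniz, hwx]; noncomm_ring
  have hDDDw : 𝒳.D (𝒳.D (𝒳.D w))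
      = (𝒳.D (𝒳.D (𝒳.D v)) + (𝒳.D (𝒳.D v) * 𝒳.D v + 𝒳.D v * 𝒳.D (𝒳.D v))) * w
        + (𝒳.D (𝒳.D v) + 𝒳.D v * 𝒳.D v) * (𝒳.D v * w) := by
    rw [hDDw, 𝒳.leibniz, map_add, 𝒳.leibniz, hwx]
  have keyξ : 𝒳.D (𝒳.D (𝒳.D ξ)) - 3 * ((𝒳.D w) * winv) ^ 2 * (𝒳.D ξ)
        + 3 * (((𝒳.D w) * winv) ^ 3 - (𝒳.D w) * (𝒳.D (𝒳.D w)) * winv ^ 2) * ξ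
      = 𝒳.D (𝒳.D (𝒳.D ξ)) - 3 * (𝒳.D v) ^ 2 * (𝒳.D ξ)
        - 3 * (𝒳.D v) * (𝒳.D (𝒳.D v)) * ξ := by
    rw [hDDw, hwx]
    exact aux_rhs1 (𝒳.D v) (𝒳.D (𝒳.D v)) w winv ξ (𝒳.D ξ) (𝒳.D (𝒳.D (𝒳.D ξ))) hw1 cw
  have keyw : 𝒳.D (𝒳.D (𝒳.D w)) - 3 * (𝒳.D w) * winv * (𝒳.D (𝒳.D w))
        + 3 * (𝒳.D w) * ξ * (𝒳.D ξ)
      = (𝒳.D (𝒳.D (𝒳.D v)) - 2 * (𝒳.D v) ^ 3 + 3 * (𝒳.D v) * ξ * (𝒳.D ξ)) * w := by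
    rw [hDDDw, hDDw, hwx]
    exact aux_rhs2 (𝒳.D v) (𝒳.D (𝒳.D v)) (𝒳.D (𝒳.D (𝒳.D v))) w winv ξ (𝒳.D ξ) hw1 cw cy
  have cancel : ∀ a b : A, a * w = b * w ↔ a = b := by
    intro a b
    constructor
    · intro h
      have h' := congrArg (fun z => z * winv) h
      simpa [mul_assoc, hw1] using h'
    · intro h; rw [h]
  constructor
  · rintro ⟨h1, h2⟩
    refine ⟨h1.trans keyξ, ?_⟩
    rw [hwt, keyw] at h2
    exact (cancel _ _).mp h2
  · rintro ⟨h1, h2⟩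
    refine ⟨h1.trans keyξ.symm, ?_⟩
    rw [hwt, keyw]
    exact (cancel _ _).mpr h2
end
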